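/- arXiv:1208.0350 — 3 statements merged into one kernel-verified Lean document; each statement's English description precedes it below -/
import Mathlib

section
/- Let g be a finite dimensional Lie algebra over a field k, M a finite dimensional g-module, and σ ∈ g such that g is spanned by eigenvectors of ad σ with eigenvalues in k. If F is an n-cocycle of g with coefficients in M (i.e., δF = 0) which is homogeneous of degree r ∈ k with respect to σ and r ≠ 0, then F is a coboundary; explicitly, F = δ(r^{−1} · ι_σ F). -/
variable {k L M : Type*}

section

variable [CommRing k] [LieRing L] [LieAlgebra k L]
  [AddCommGroup M] [Module k M] [LieRingModule L M] [LieModule k L M]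

/-- The Chevalley–Eilenberg coboundary of an `n`-cochain (given as a function on `n`-tuples):
`(δF)(a₀,…,aₙ) = ∑ᵢ (−1)ⁱ ⁅aᵢ, F(…,âᵢ,…)⁆
  + ∑_{i<j} (−1)^{i+j} F(⁅aᵢ,aⱼ⁆, a₀,…,âᵢ,…,âⱼ,…,aₙ)`.
In the second sum, the pair `i < j` is encoded as `(i, i.succAbove j)` with `(i : ℕ) ≤ (j : ℕ)`,
so that the actual second index is `j + 1` and the sign is `(−1)^{i+j+1}`. -/
def ceCoboundary : ∀ {n : ℕ}, ((Fin n → L) → M) → (Fin (n + 1) → L) → M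
  | 0, F => fun a => ⁅a 0, F Fin.elim0⁆
  | m + 1, F => fun a =>
      (∑ i : Fin (m + 2), ((-1 : ℤ) ^ (i : ℕ)) • ⁅a i, F (a ∘ i.succAbove)⁆) +
      ∑ i : Fin (m + 2), ∑ j : Fin (m + 1),
        if (i : ℕ) ≤ (j : ℕ) then
          ((-1 : ℤ) ^ ((i : ℕ) + (j : ℕ) + 1)) •
            F (Fin.cons ⁅a i, a (i.succAbove j)⁆ ((a ∘ i.succAbove) ∘ j.succAbove))
        else 0

/-- Contraction `ι_σ F` of a cochain `F` with an element `σ` in the first slot. -/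
def ceContract {n : ℕ} (σ : L) (F : (Fin (n + 1) → L) → M) : (Fin n → L) → M :=
  fun v => F (Fin.cons σ v)

/-- An `n`-cochain `F` is homogeneous of degree `r` with respect to `σ` if whenever
`⁅σ, aᵢ⁆ = λᵢ • aᵢ` for all `i`, one has `⁅σ, F(a₁,…,aₙ)⁆ = (λ₁ + ⋯ + λₙ + r) • F(a₁,…,aₙ)`. -/
def IsHomogeneousOfDegree (σ : L) (r : k) {n : ℕ} (F : (Fin n → L) → M) : Prop :=
  ∀ (a : Fin n → L) (lam : Fin n → k),
    (∀ i, ⁅σ, a i⁆ = lam i • a i) → ⁅σ, F a⁆ = ((∑ i, lam i) + r) • F a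

end

/-!
Cartan's formula `ι_σ ∘ δ + δ ∘ ι_σ = L_σ` holds for the action `L_σ = ceLieDerivative σ` of `σ`
on cochains.
Homogeneity of degree `r` says that `L_σ F = r • F` on tuples of eigenvectors of `ad σ`, hence
everywhere, since both sides are multilinear and the eigenvectors span `L`. For a cocycle `F`
Cartan's formula then reads `δ (ι_σ F) = L_σ F = r • F`.
-/

open Function

namespace AlternatingMap

variable {R M N : Type*} [CommRing R] [AddCommGroup M] [Module R M] [AddCommGroup N] [Module R N]
  {n : ℕ}

theorem map_cons_comp_succAbove (f : M [⋀^Fin (n + 1)]→ₗ[R] N) (a : Fin (n + 1) → M)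
    (j : Fin (n + 1)) (x : M) :
    f (Fin.cons x (a ∘ j.succAbove)) = (-1) ^ (j : ℕ) • f (update a j x) := by
  have h := f.neg_one_pow_smul_map_insertNth j x (j.removeNth a)
  rw [Fin.insertNth_removeNth] at h
  exact h.symm

theorem map_cons_cons_swap (f : M [⋀^Fin (n + 2)]→ₗ[R] N) (x y : M) (w : Fin n → M) :
    f (Fin.cons x (Fin.cons y w)) = -f (Fin.cons y (Fin.cons x w)) := by
  have h := f.map_insertNth (0 : Fin (n + 1)).succ x (Fin.cons y w)
  rw [Fin.insertNth_succ_cons, Fin.insertNth_zero'] at h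
  simp [h, Matrix.vecCons]

end AlternatingMap

section Cochains

variable [CommRing k] [LieRing L] [LieAlgebra k L] [AddCommGroup M] [Module k M]

theorem ceCoboundary_cons_bracketTerms_zero {n : ℕ} (F : AlternatingMap k L M (Fin (n + 1)))
    (σ : L) (a : Fin (n + 1) → L) :
    (∑ j : Fin (n + 1), if ((0 : Fin (n + 2)) : ℕ) ≤ j then
        (-1 : ℤ) ^ (((0 : Fin (n + 2)) : ℕ) + j + 1) • F (Fin.cons
          ⁅(Fin.cons σ a : Fin (n + 2) → L) 0,
            (Fin.cons σ a : Fin (n + 2) → L) ((0 : Fin (n + 2)).succAbove j)⁆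
          ((Fin.cons σ a ∘ (0 : Fin (n + 2)).succAbove) ∘ j.succAbove))
      else 0) = -∑ j, F (update a j ⁅σ, a j⁆) := by
  simp [F.map_cons_comp_succAbove, smul_smul, ← pow_add]

theorem ceCoboundary_cons_bracketTerms_succ {n : ℕ} (F : AlternatingMap k L M (Fin (n + 2)))
    (σ : L) (a : Fin (n + 2) → L) (i : Fin (n + 2)) :
    (∑ j : Fin (n + 2), if ((i.succ : Fin (n + 3)) : ℕ) ≤ j then
        (-1 : ℤ) ^ ((i.succ : ℕ) + j + 1) • F (Fin.cons
          ⁅(Fin.cons σ a : Fin (n + 3) → L) i.succ,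
            (Fin.cons σ a : Fin (n + 3) → L) (i.succ.succAbove j)⁆
          ((Fin.cons σ a ∘ i.succ.succAbove) ∘ j.succAbove))
      else 0) =
    -∑ j : Fin (n + 1), if (i : ℕ) ≤ j then
        (-1 : ℤ) ^ ((i : ℕ) + j + 1) •
          ceContract σ F (Fin.cons ⁅a i, a (i.succAbove j)⁆ ((a ∘ i.succAbove) ∘ j.succAbove))
      else 0 := by
  rw [Fin.sum_univ_succ, ← Finset.sum_neg_distrib]
  simp only [Fin.val_succ, Fin.val_zero, Fin.cons_succ, Fin.succ_succAbove_zero,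
    Fin.succ_succAbove_succ, Fin.cons_comp_succ_succAbove, add_le_add_iff_right, ceContract]
  rw [if_neg (by omega), zero_add]
  refine Finset.sum_congr rfl fun j _ => ?_
  split_ifs
  · rw [F.map_cons_cons_swap, smul_neg,
      show (i : ℕ) + 1 + (j + 1) + 1 = i + j + 1 + 2 by ring, pow_add, neg_one_sq, mul_one]
    rfl
  · rw [neg_zero]

variable [LieRingModule L M] [LieModule k L M]

theorem ceCoboundary_cons_actionTerms {n : ℕ} (G : (Fin (n + 1) → L) → M) (σ : L)
    (a : Fin (n + 1) → L) :
    ∑ i : Fin (n + 2), (-1 : ℤ) ^ (i : ℕ) •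
        ⁅(Fin.cons σ a : Fin (n + 2) → L) i, G (Fin.cons σ a ∘ i.succAbove)⁆ =
      ⁅σ, G a⁆ - ∑ i : Fin (n + 1), (-1 : ℤ) ^ (i : ℕ) • ⁅a i, ceContract σ G (a ∘ i.succAbove)⁆ := by
  rw [Fin.sum_univ_succ, sub_eq_add_neg, ← Finset.sum_neg_distrib]
  congr 1
  · rw [Fin.cons_zero, Fin.val_zero, pow_zero, one_smul, Fin.succAbove_zero, Fin.cons_comp_succ]
  · refine Finset.sum_congr rfl fun i _ => ?_
    rw [Fin.cons_succ, Fin.cons_comp_succ_succAbove, Fin.val_succ, pow_succ, mul_neg_one, neg_smul]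
    rfl

theorem ceCoboundary_smul {n : ℕ} (c : k) (G : (Fin n → L) → M) :
    ceCoboundary (c • G) = c • ceCoboundary G := by
  cases n <;> ext a <;>
    simp only [ceCoboundary, Pi.smul_apply, lie_smul, smul_add, Finset.smul_sum, smul_ite,
      smul_zero, smul_comm c]

variable {ι : Type*} [Fintype ι] [DecidableEq ι]

def ceLieDerivative (σ : L) (F : MultilinearMap k (fun _ : ι => L) M) :
    MultilinearMap k (fun _ : ι => L) M :=
  (LieModule.toEnd k L M σ).compMultilinearMap F -
    ∑ i, F.compLinearMap (update (fun _ => LinearMap.id) i (LieModule.toEnd k L L σ))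

theorem ceLieDerivative_apply (σ : L) (F : MultilinearMap k (fun _ : ι => L) M) (a : ι → L) :
    ceLieDerivative σ F a = ⁅σ, F a⁆ - ∑ i, F (update a i ⁅σ, a i⁆) := by
  simp only [ceLieDerivative, sub_apply, sum_apply, LinearMap.compMultilinearMap_apply,
    MultilinearMap.compLinearMap_apply, LieModule.toEnd_apply_apply]
  congr 2 with i
  congr 1 with j
  rcases eq_or_ne j i with rfl | hji <;> simp [*]

theorem ceLieDerivative_eq_smul_of_isHomogeneousOfDegree {σ : L}
    (hL : Submodule.span k {y : L | ∃ c : k, ⁅σ, y⁆ = c • y} = ⊤) {r : k} {n : ℕ}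
    {F : MultilinearMap k (fun _ : Fin n => L) M} (hF : IsHomogeneousOfDegree σ r ⇑F) :
    ceLieDerivative σ F = r • F := by
  refine MultilinearMap.ext_of_span_eq_top
    (g := fun _ (y : {y : L | ∃ c : k, ⁅σ, y⁆ = c • y}) => (y : L))
    (fun _ => by rwa [Subtype.range_coe]) fun v => ?_
  choose lam hlam using fun i => (v i).2
  have h_update : ∀ i, F (update (fun j => (v j : L)) i ⁅σ, v i⁆) = lam i • F (fun j => v j) := by
    intro i
    rw [hlam i, F.map_update_smul, update_eq_self]
  rw [ceLieDerivative_apply, hF _ lam hlam, smul_apply]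
  simp only [h_update, add_smul, Finset.sum_smul, add_sub_cancel_left]

theorem ceCoboundary_cons {n : ℕ} (F : AlternatingMap k L M (Fin (n + 1))) (σ : L)
    (a : Fin (n + 1) → L) :
    ceCoboundary F (Fin.cons σ a) =
      ceLieDerivative σ F.toMultilinearMap a - ceCoboundary (ceContract σ F) a := by
  simp only [ceLieDerivative_apply, AlternatingMap.coe_multilinearMap, ceCoboundary]
  rw [ceCoboundary_cons_actionTerms, Fin.sum_univ_succ (n := n + 1),
    ceCoboundary_cons_bracketTerms_zero]
  cases n with
  | zero =>
    simp only [Nat.reduceAdd, Finset.univ_unique, Fin.default_eq_zero, Finset.sum_singleton,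
      Fin.val_eq_zero, pow_zero, one_smul, Fin.succAbove_zero,
      Subsingleton.elim (a ∘ Fin.succ) Fin.elim0, Fin.val_succ, zero_add, nonpos_iff_eq_zero,
      one_ne_zero, if_false, Finset.sum_const_zero, add_zero]
    abel
  | succ n =>
    simp only [ceCoboundary_cons_bracketTerms_succ, Finset.sum_neg_distrib]
    abel

end Cochains

theorem stmt3_general [Field k] [LieRing L] [LieAlgebra k L]
    [AddCommGroup M] [Module k M] [LieRingModule L M] [LieModule k L M]
    (σ : L)
    (hL : Submodule.span k {y : L | ∃ c : k, ⁅σ, y⁆ = c • y} = ⊤)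
    {n : ℕ} (F : AlternatingMap k L M (Fin (n + 1))) (r : k) (hr : r ≠ 0)
    (hF : IsHomogeneousOfDegree σ r ⇑F)
    (hcocycle : ceCoboundary ⇑F = 0) :
    ⇑F = ceCoboundary (r⁻¹ • ceContract σ ⇑F) := by
  have hLie : ceLieDerivative σ F.toMultilinearMap = r • F.toMultilinearMap :=
    ceLieDerivative_eq_smul_of_isHomogeneousOfDegree hL hF
  ext a
  have hCartan := ceCoboundary_cons F σ a
  rw [hcocycle, hLie, Pi.zero_apply, eq_comm, sub_eq_zero] at hCartan
  rw [ceCoboundary_smul, Pi.smul_apply, ← hCartan, smul_apply, AlternatingMap.coe_multilinearMap,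
    inv_smul_smul₀ hr]

/-- Theorem 1(1): a homogeneous cocycle of degree `r ≠ 0` is the coboundary of
`r⁻¹ • ι_σ F`. -/
theorem stmt3 [Field k] [LieRing L] [LieAlgebra k L]
    [AddCommGroup M] [Module k M] [LieRingModule L M] [LieModule k L M]
    [FiniteDimensional k L] [FiniteDimensional k M]
    (σ : L)
    (hL : Submodule.span k {y : L | ∃ c : k, ⁅σ, y⁆ = c • y} = ⊤)
    {n : ℕ} (F : AlternatingMap k L M (Fin (n + 1))) (r : k) (hr : r ≠ 0)
    (hF : IsHomogeneousOfDegree σ r ⇑F)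
    (hcocycle : ceCoboundary ⇑F = 0) :
    ⇑F = ceCoboundary (r⁻¹ • ceContract σ ⇑F) :=
  stmt3_general σ hL F r hr hF hcocycle
end

section
/- Let g be a finite dimensional Lie algebra over a field k, M a finite dimensional g-module, and σ ∈ g such that g is spanned by eigenvectors of ad σ with eigenvalues in k. If F is a 1-cocycle of g with coefficients in M which is homogeneous of degree 0 with respect to σ, then F(σ) lies in the invariants M^g, i.e., a · F(σ) = 0 for every a ∈ g. -/
/-! Evaluating the cocycle identity at `(σ, x)` for an eigenvector `x` of `ad σ`, homogeneity of
degree `0` cancels `σ · F(x)` against `F ⁅σ, x⁆`, leaving `x · F(σ) = 0`. Since `a ↦ a · F(σ)` is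
linear and the eigenvectors span `g`, it vanishes identically. -/

theorem lie_eq_zero_of_span_eq_top {k L M : Type*} [CommRing k] [LieRing L] [LieAlgebra k L]
    [AddCommGroup M] [Module k M] [LieRingModule L M] [LieModule k L M]
    {s : Set L} (hs : Submodule.span k s = ⊤) {m : M} (h : ∀ x ∈ s, ⁅x, m⁆ = 0) (a : L) :
    ⁅a, m⁆ = 0 :=
  LinearMap.congr_fun (LinearMap.ext_on hs (g := 0) h
    (f := (LieModule.toEnd k L M : L →ₗ[k] Module.End k M).flip m)) a

theorem lie_apply_eq_zero_of_cocycle_of_eigenvector {k L M : Type*} [CommRing k] [LieRing L]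
    [LieAlgebra k L] [AddCommGroup M] [Module k M] [LieRingModule L M]
    {F : L →ₗ[k] M} {σ x : L} {c : k}
    (hδ : ⁅σ, F x⁆ - ⁅x, F σ⁆ - F ⁅σ, x⁆ = 0) (hx : ⁅σ, x⁆ = c • x)
    (hFx : ⁅σ, F x⁆ = c • F x) : ⁅x, F σ⁆ = 0 := by
  rw [hx, map_smul, hFx, sub_sub, sub_eq_zero, right_eq_add] at hδ
  exact hδ

theorem stmt6_general {k L M : Type*} [Field k] [LieRing L] [LieAlgebra k L]
    [AddCommGroup M] [Module k M] [LieRingModule L M] [LieModule k L M]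
    (σ : L)
    (hL : Submodule.span k {y : L | ∃ c : k, ⁅σ, y⁆ = c • y} = ⊤)
    (F : L →ₗ[k] M)
    (hcocycle : ∀ a b : L, ⁅a, F b⁆ - ⁅b, F a⁆ - F ⁅a, b⁆ = 0)
    (hF : ∀ (a : L) (c : k), ⁅σ, a⁆ = c • a → ⁅σ, F a⁆ = (c + 0) • F a) :
    ∀ a : L, ⁅a, F σ⁆ = 0 :=
  lie_eq_zero_of_span_eq_top hL fun x ⟨c, hc⟩ =>
    lie_apply_eq_zero_of_cocycle_of_eigenvector (hcocycle σ x) hc (by simpa using hF x c hc)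

theorem stmt6 {k L M : Type*} [Field k] [LieRing L] [LieAlgebra k L]
    [AddCommGroup M] [Module k M] [LieRingModule L M] [LieModule k L M]
    [FiniteDimensional k L] [FiniteDimensional k M]
    (σ : L)
    (hL : Submodule.span k {y : L | ∃ c : k, ⁅σ, y⁆ = c • y} = ⊤)
    (F : L →ₗ[k] M)
    (hcocycle : ∀ a b : L, ⁅a, F b⁆ - ⁅b, F a⁆ - F ⁅a, b⁆ = 0)
    (hF : ∀ (a : L) (c : k), ⁅σ, a⁆ = c • a → ⁅σ, F a⁆ = (c + 0) • F a) :
    ∀ a : L, ⁅a, F σ⁆ = 0 :=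
  stmt6_general σ hL F hcocycle hF
end

section
/- Let k be a field whose characteristic p is zero or greater than N, let b be the Borel subalgebra of upper triangular matrices in sl(N, k), and h ⊂ b the Cartan subalgebra of diagonal matrices. Then every multidegree-zero n-cochain F : b^n → k (trivial coefficients) is a cocycle: (δF)(a_0, …, a_n) = Σ_{0≤i<j≤n} (−1)^{i+j} F([a_i, a_j], a_0, …, â_i, …, â_j, …, a_n) = 0 for all a_0, …, a_n ∈ b. In particular, every multidegree-zero coboundary is zero. -/
/- STATEMENT 11: every multidegree-zero cochain of the Borel subalgebra of sl(N,k) with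
trivial coefficients is a cocycle, and every multidegree-zero coboundary is zero, provided
the characteristic of k is zero or greater than N. -/

attribute [local instance 100] LieRing.ofAssociativeRing

variable (N : ℕ) (k : Type*) [Field k]

/-- The Borel subalgebra of `sl(N, k)`: the Lie subalgebra of `Matrix (Fin N) (Fin N) k`
consisting of upper triangular matrices of trace zero. -/
def slBorel : LieSubalgebra k (Matrix (Fin N) (Fin N) k) where
  carrier := {A | Matrix.trace A = 0 ∧ ∀ i j : Fin N, j < i → A i j = 0}
  add_mem' := by
    rintro A B ⟨hA1, hA2⟩ ⟨hB1, hB2⟩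
    refine ⟨?_, fun i j h => ?_⟩
    · simp [Matrix.trace_add, hA1, hB1]
    · simp [Matrix.add_apply, hA2 i j h, hB2 i j h]
  zero_mem' := ⟨Matrix.trace_zero _ _, fun _ _ _ => rfl⟩
  smul_mem' := by
    rintro c A ⟨hA1, hA2⟩
    refine ⟨?_, fun i j h => ?_⟩
    · simp [Matrix.trace_smul, hA1]
    · simp [Matrix.smul_apply, hA2 i j h]
  lie_mem' := by
    rintro A B ⟨hA1, hA2⟩ ⟨hB1, hB2⟩
    refine ⟨?_, fun i j h => ?_⟩
    · simp [Ring.lie_def, Matrix.trace_sub, Matrix.trace_mul_comm A B]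
    · have h1 : ∑ l, A i l * B l j = 0 :=
        Finset.sum_eq_zero fun l _ => by
          rcases lt_or_ge l i with hl | hl
          · rw [hA2 i l hl, zero_mul]
          · rw [hB2 l j (lt_of_lt_of_le h hl), mul_zero]
      have h2 : ∑ l, B i l * A l j = 0 :=
        Finset.sum_eq_zero fun l _ => by
          rcases lt_or_ge l i with hl | hl
          · rw [hB2 i l hl, zero_mul]
          · rw [hA2 l j (lt_of_lt_of_le h hl), mul_zero]
      simp [Ring.lie_def, Matrix.sub_apply, Matrix.mul_apply, h1, h2]

/-- The Cartan subalgebra of `sl(N, k)`: diagonal matrices of trace zero. -/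
def slCartan : Submodule k (Matrix (Fin N) (Fin N) k) where
  carrier := {A | Matrix.trace A = 0 ∧ ∀ i j : Fin N, i ≠ j → A i j = 0}
  add_mem' := by
    rintro A B ⟨hA1, hA2⟩ ⟨hB1, hB2⟩
    exact ⟨by simp [Matrix.trace_add, hA1, hB1],
      fun i j h => by simp [Matrix.add_apply, hA2 i j h, hB2 i j h]⟩
  zero_mem' := ⟨Matrix.trace_zero _ _, fun _ _ _ => rfl⟩
  smul_mem' := by
    rintro c A ⟨hA1, hA2⟩
    exact ⟨by simp [Matrix.trace_smul, hA1],
      fun i j h => by simp [Matrix.smul_apply, hA2 i j h]⟩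

/-- The slNilradical of the Borel subalgebra: strictly upper triangular matrices. -/
def slNilrad : Submodule k (Matrix (Fin N) (Fin N) k) where
  carrier := {A | ∀ i j : Fin N, j ≤ i → A i j = 0}
  add_mem' := by
    rintro A B hA hB
    exact fun i j h => by simp [Matrix.add_apply, hA i j h, hB i j h]
  zero_mem' := fun _ _ _ => rfl
  smul_mem' := by
    rintro c A hA
    exact fun i j h => by simp [Matrix.smul_apply, hA i j h]

/-- An `n`-cochain of the Borel subalgebra with trivial coefficients `k` is multidegree-zero
if it vanishes on every tuple of simultaneous `ad h`-eigenvectors (for all `h` in the Cartan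
subalgebra) whose weights `α₁, …, αₙ ∈ h*` do not sum to zero. -/
def MultidegZero {n : ℕ} (F : AlternatingMap k (↥(slBorel N k)) k (Fin n)) : Prop :=
  ∀ (a : Fin n → ↥(slBorel N k)) (α : Fin n → (↥(slCartan N k) →ₗ[k] k)),
    (∀ (i : Fin n) (x : ↥(slCartan N k)),
        ⁅(x : Matrix (Fin N) (Fin N) k), (a i : Matrix (Fin N) (Fin N) k)⁆ =
          α i x • (a i : Matrix (Fin N) (Fin N) k)) →
    (∑ i, α i) ≠ 0 → F a = 0

section

variable {N : ℕ} {k : Type*} [Field k]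

/-- The Chevalley–Eilenberg coboundary with trivial coefficients `k`:
`(δF)(a₀,…,aₙ) = ∑_{i<j} (−1)^{i+j} F(⁅aᵢ,aⱼ⁆, a₀,…,âᵢ,…,âⱼ,…,aₙ)`.
The pair `i < j` is encoded as `(i, i.succAbove j)` with `(i : ℕ) ≤ (j : ℕ)`, so the
actual second index is `j + 1` and the sign is `(−1)^{i+j+1}`. -/
def trivCoboundary :
    ∀ {n : ℕ}, ((Fin n → ↥(slBorel N k)) → k) → (Fin (n + 1) → ↥(slBorel N k)) → k
  | 0, _ => fun _ => 0
  | m + 1, F => fun a =>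
      ∑ i : Fin (m + 2), ∑ j : Fin (m + 1),
        if (i : ℕ) ≤ (j : ℕ) then
          ((-1 : ℤ) ^ ((i : ℕ) + (j : ℕ) + 1)) •
            F (Fin.cons ⁅a i, a (i.succAbove j)⁆ ((a ∘ i.succAbove) ∘ j.succAbove))
        else 0

end

/-! Every element of `b` is the sum of its diagonal part and of its root components
`x p q • E p q` (`p < q`), which are `ad h`-eigenvectors of weight `0` and `εₚ - ε_q`; by
multilinearity it suffices to evaluate cochains on tuples of such homogeneous vectors. A term
`F(⁅aᵢ, aⱼ⁆, …)` of `δF` is then again evaluated on a homogeneous tuple of the same total weight,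
because `⁅aᵢ, aⱼ⁆` is zero or a root vector. If the total weight is nonzero, the term vanishes since
`F` is multidegree-zero. If it is zero, the term vanishes for every alternating `F`: let `u` be the
smallest row index of a root vector among the arguments; evaluating the total weight at
`N • E u u - 1 ∈ h` gives `N · #{arguments in row u} = 0`, so as `char k` is `0` or `> N` more than
`N` arguments lie in row `u`, two of them are multiples of the same `E u q`, and an alternating map
vanishes on them. For a coboundary `F = δG`, the same two cases show that `F` vanishes on every
homogeneous tuple. -/

theorem AlternatingMap.map_eq_zero_of_eq_smul {R M M' ι : Type*} [Semiring R] [AddCommMonoid M]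
    [Module R M] [AddCommMonoid M'] [Module R M'] (f : M [⋀^ι]→ₗ[R] M') {v : ι → M} {i j : ι}
    (hij : i ≠ j) {c : R} (h : v j = c • v i) : f v = 0 := by
  classical
  rw [← Function.update_eq_self j v, h, f.map_update_smul, f.map_update_self _ hij.symm, smul_zero]

theorem Fin.sum_univ_succAbove_succAbove {M : Type*} [AddCommMonoid M] {m : ℕ}
    (f : Fin (m + 2) → M) (i : Fin (m + 2)) (j : Fin (m + 1)) :
    ∑ l, f l = f i + f (i.succAbove j) + ∑ l : Fin m, f (i.succAbove (j.succAbove l)) := by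
  rw [Fin.sum_univ_succAbove f i, Fin.sum_univ_succAbove _ j, add_assoc]

theorem natCast_ne_zero_of_le {k : Type*} [Field k] {N n : ℕ}
    (hchar : ringChar k = 0 ∨ N < ringChar k) (h0 : n ≠ 0) (hn : n ≤ N) : (n : k) ≠ 0 := by
  rw [Ne, CharP.cast_eq_zero_iff k (ringChar k)]
  intro hdvd
  rcases hchar with h | h
  · exact h0 (zero_dvd_iff.mp (h ▸ hdvd))
  · exact (Nat.le_of_dvd (Nat.pos_of_ne_zero h0) hdvd).not_gt (hn.trans_lt h)

theorem Matrix.diagonal_lie_single {n R : Type*} [DecidableEq n] [Fintype n] [CommRing R]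
    (d : n → R) (p q : n) (c : R) :
    ⁅Matrix.diagonal d, Matrix.single p q c⁆ = Matrix.single p q ((d p - d q) * c) := by
  ext i j
  rw [Ring.lie_def, Matrix.sub_apply, Matrix.diagonal_mul, Matrix.mul_diagonal]
  by_cases h : p = i ∧ q = j
  · obtain ⟨rfl, rfl⟩ := h
    simp only [Matrix.single_apply_same]
    ring
  · simp only [Matrix.single_apply_of_ne _ _ _ _ _ h, mul_zero, zero_mul, sub_zero]

section Coboundary

variable {R L M : Type*} [CommRing R] [LieRing L] [LieAlgebra R L] [AddCommGroup M] [Module R M]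
  {m : ℕ}

def bracketFirst (F : MultilinearMap R (fun _ : Fin (m + 1) => L) M) :
    MultilinearMap R (fun _ : Fin (m + 2) => L) M :=
  LinearMap.uncurryLeft <|
    (multilinearCurryLeftEquiv R (fun _ : Fin (m + 1) => L) _).symm.toLinearMap ∘ₗ
      (LieModule.toEnd R L L : L →ₗ[R] Module.End R L).compr₂ F.curryLeft

theorem bracketFirst_apply (F : MultilinearMap R (fun _ : Fin (m + 1) => L) M)
    (a : Fin (m + 2) → L) :
    bracketFirst F a = F (Fin.cons ⁅a 0, a 1⁆ fun l => a l.succ.succ) :=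
  rfl

/-- The permutation sends `0 ↦ i`, `1 ↦ i.succAbove j`, `l + 2 ↦ i.succAbove (j.succAbove l)`. -/
def bracketTerm (F : MultilinearMap R (fun _ : Fin (m + 1) => L) M)
    (i : Fin (m + 2)) (j : Fin (m + 1)) : MultilinearMap R (fun _ : Fin (m + 2) => L) M :=
  (bracketFirst F).domDomCongr
    ((Equiv.Perm.decomposeFin.symm (0, j.cycleRange.symm)).trans i.cycleRange.symm)

theorem bracketTerm_apply (F : MultilinearMap R (fun _ : Fin (m + 1) => L) M)
    (i : Fin (m + 2)) (j : Fin (m + 1)) (a : Fin (m + 2) → L) :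
    bracketTerm F i j a =
      F (Fin.cons ⁅a i, a (i.succAbove j)⁆ ((a ∘ i.succAbove) ∘ j.succAbove)) := by
  simp only [bracketTerm, MultilinearMap.domDomCongr_apply, bracketFirst_apply]
  congr 2
  · simp
  · funext l
    simp

def coboundary (F : MultilinearMap R (fun _ : Fin (m + 1) => L) M) :
    MultilinearMap R (fun _ : Fin (m + 2) => L) M :=
  ∑ i : Fin (m + 2), ∑ j : Fin (m + 1),
    (if (i : ℕ) ≤ (j : ℕ) then (-1 : ℤ) ^ ((i : ℕ) + (j : ℕ) + 1) else 0) • bracketTerm F i j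

theorem coboundary_apply_eq_zero {F : MultilinearMap R (fun _ : Fin (m + 1) => L) M}
    {a : Fin (m + 2) → L} (h : ∀ i j, bracketTerm F i j a = 0) : coboundary F a = 0 := by
  simp only [coboundary, sum_apply, smul_apply, h, smul_zero, Finset.sum_const_zero]

end Coboundary

theorem trivCoboundary_eq_coboundary {N m : ℕ} {k : Type*} [Field k]
    (F : slBorel N k [⋀^Fin (m + 1)]→ₗ[k] k) :
    trivCoboundary ⇑F = ⇑(coboundary F.toMultilinearMap) := by
  funext a
  simp only [trivCoboundary, coboundary, sum_apply, smul_apply]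
  refine Finset.sum_congr rfl fun i _ => Finset.sum_congr rfl fun j _ => ?_
  split_ifs <;> simp [bracketTerm_apply]

namespace slBorel

variable {N k}

abbrev PosRoot (N : ℕ) := {pq : Fin N × Fin N // pq.1 < pq.2}

variable (k) in
def rootWeight (s : PosRoot N) : slCartan N k →ₗ[k] k :=
  (Matrix.entryLinearMap k k s.1.1 s.1.1 - Matrix.entryLinearMap k k s.1.2 s.1.2) ∘ₗ
    (slCartan N k).subtype

variable (k) in
def weight : Option (PosRoot N) → slCartan N k →ₗ[k] k
  | none => 0
  | some s => rootWeight k s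

/-- `none` stands for the diagonal part of `b`, `some s` for the root space of `s`. -/
def IsHomogeneous : Option (PosRoot N) → slBorel N k → Prop
  | none, x => (x : Matrix (Fin N) (Fin N) k).IsDiag
  | some s, x => ∃ c : k, (x : Matrix (Fin N) (Fin N) k) = Matrix.single s.1.1 s.1.2 c

theorem single_mem (s : PosRoot N) (c : k) : Matrix.single s.1.1 s.1.2 c ∈ slBorel N k :=
  ⟨Matrix.trace_single_eq_of_ne _ _ _ s.2.ne, fun _ _ hji =>
    Matrix.single_apply_of_ne _ _ _ _ _ fun ⟨hi, hj⟩ => (s.2.trans (hi ▸ hj ▸ hji)).false⟩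

theorem diagonal_diag_mem (x : slBorel N k) :
    Matrix.diagonal (x : Matrix (Fin N) (Fin N) k).diag ∈ slBorel N k :=
  ⟨by simpa [Matrix.trace] using x.2.1, fun _ _ hji => Matrix.diagonal_apply_ne _ hji.ne'⟩

def component (x : slBorel N k) : Option (PosRoot N) → slBorel N k
  | none => ⟨_, diagonal_diag_mem x⟩
  | some s => ⟨_, single_mem s ((x : Matrix (Fin N) (Fin N) k) s.1.1 s.1.2)⟩

theorem isHomogeneous_component (x : slBorel N k) : ∀ t, IsHomogeneous t (component x t)
  | none => Matrix.isDiag_diagonal _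
  | some _ => ⟨_, rfl⟩

theorem sum_component (x : slBorel N k) : ∑ t, component x t = x := by
  ext i j
  simp only [component, Fintype.sum_option, AddMemClass.coe_add, AddSubmonoidClass.coe_finsetSum,
    Matrix.add_apply, Matrix.diagonal_apply, Matrix.diag_apply, Matrix.sum_apply,
    Matrix.single_apply]
  have hne {c : PosRoot N} {i' : Fin N} : ¬(c.1.1 = i' ∧ c.1.2 = i') :=
    fun h => c.2.ne (h.1.trans h.2.symm)
  rcases lt_trichotomy i j with h | rfl | h
  · rw [if_neg h.ne, zero_add, Fintype.sum_eq_single ⟨(i, j), h⟩, if_pos ⟨rfl, rfl⟩]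
    exact fun c hc => if_neg fun h' => hc (Subtype.ext (Prod.ext h'.1 h'.2))
  · simp [hne]
  · rw [if_neg h.ne', zero_add, x.2.2 i j h]
    exact Finset.sum_eq_zero fun c _ => if_neg fun h' => (c.2.trans (h'.1 ▸ h'.2 ▸ h)).false

theorem _root_.MultilinearMap.eq_zero_of_isHomogeneous {r : ℕ} {M : Type*} [AddCommGroup M]
    [Module k M] (f : MultilinearMap k (fun _ : Fin r => slBorel N k) M)
    (h : ∀ (g : Fin r → Option (PosRoot N)) (a : Fin r → slBorel N k),
      (∀ l, IsHomogeneous (g l) (a l)) → f a = 0) : f = 0 := by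
  ext a
  rw [← funext fun l => sum_component (a l), f.map_sum]
  exact Finset.sum_eq_zero fun g _ => h g _ fun l => isHomogeneous_component _ _

theorem IsHomogeneous.lie_cartan {t : Option (PosRoot N)} {x : slBorel N k}
    (hx : IsHomogeneous t x) (y : slCartan N k) :
    ⁅(y : Matrix (Fin N) (Fin N) k), (x : Matrix (Fin N) (Fin N) k)⁆ =
      weight k t y • (x : Matrix (Fin N) (Fin N) k) := by
  rw [← (show (y : Matrix (Fin N) (Fin N) k).IsDiag from y.2.2).diagonal_diag]
  match t, hx with
  | none, hx =>
    rw [← hx.diagonal_diag, Ring.lie_def, Matrix.diagonal_mul_diagonal,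
      Matrix.diagonal_mul_diagonal, weight, LinearMap.zero_apply, zero_smul]
    simp [mul_comm]
  | some s, ⟨c, hc⟩ =>
    rw [hc, Matrix.diagonal_lie_single, Matrix.smul_single]
    rfl

theorem _root_.MultidegZero.apply_eq_zero {n : ℕ} {F : slBorel N k [⋀^Fin n]→ₗ[k] k}
    (hF : MultidegZero N k F) {g : Fin n → Option (PosRoot N)} {a : Fin n → slBorel N k}
    (ha : ∀ l, IsHomogeneous (g l) (a l)) (hsum : ∑ l, weight k (g l) ≠ 0) : F a = 0 :=
  hF a (fun l => weight k (g l)) (fun l => (ha l).lie_cartan) hsum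

theorem IsHomogeneous.lie {u v : Option (PosRoot N)} {x y : slBorel N k}
    (hx : IsHomogeneous u x) (hy : IsHomogeneous v y) :
    ⁅x, y⁆ = 0 ∨ ∃ s, IsHomogeneous (some s) ⁅x, y⁆ := by
  simp only [IsHomogeneous, ← Subtype.coe_inj (a := ⁅x, y⁆), LieSubalgebra.coe_bracket,
    ZeroMemClass.coe_zero]
  match u, v, hx, hy with
  | none, none, hx, hy =>
    left
    rw [← hx.diagonal_diag, ← hy.diagonal_diag, Ring.lie_def, Matrix.diagonal_mul_diagonal,
      Matrix.diagonal_mul_diagonal]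
    simp [mul_comm]
  | none, some s, hx, ⟨c, hc⟩ =>
    rw [hc, ← hx.diagonal_diag, Matrix.diagonal_lie_single]
    exact Or.inr ⟨s, _, rfl⟩
  | some s, none, ⟨c, hc⟩, hy =>
    rw [hc, ← lie_skew, ← hy.diagonal_diag, Matrix.diagonal_lie_single, Matrix.single_neg]
    exact Or.inr ⟨s, _, rfl⟩
  | some s, some s', ⟨c, hc⟩, ⟨c', hc'⟩ =>
    rw [hc, hc', Ring.lie_def]
    by_cases h : s.1.2 = s'.1.1
    · have h' : s'.1.2 ≠ s.1.1 := fun h' => (s.2.trans (h ▸ h' ▸ s'.2)).false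
      rw [Matrix.single_mul_single_of_ne _ _ _ _ h', sub_zero, h, Matrix.single_mul_single_same]
      exact Or.inr ⟨⟨(s.1.1, s'.1.2), s.2.trans (h ▸ s'.2)⟩, _, rfl⟩
    · by_cases h' : s'.1.2 = s.1.1
      · rw [Matrix.single_mul_single_of_ne _ _ _ _ h, zero_sub, h',
          Matrix.single_mul_single_same, Matrix.single_neg]
        exact Or.inr ⟨⟨(s'.1.1, s.1.2), s'.2.trans (h' ▸ s.2)⟩, _, rfl⟩
      · rw [Matrix.single_mul_single_of_ne _ _ _ _ h, Matrix.single_mul_single_of_ne _ _ _ _ h',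
          sub_zero]
        exact Or.inl rfl

theorem IsHomogeneous.lie_cartan_lie {u v : Option (PosRoot N)} {x y : slBorel N k}
    (hx : IsHomogeneous u x) (hy : IsHomogeneous v y) (h : slCartan N k) :
    ⁅(h : Matrix (Fin N) (Fin N) k), ((⁅x, y⁆ : slBorel N k) : Matrix (Fin N) (Fin N) k)⁆ =
      (weight k u + weight k v) h • ((⁅x, y⁆ : slBorel N k) : Matrix (Fin N) (Fin N) k) := by
  rw [LieSubalgebra.coe_bracket, leibniz_lie, hx.lie_cartan, hy.lie_cartan, smul_lie, lie_smul,
    LinearMap.add_apply, add_smul]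

theorem IsHomogeneous.weight_eq {s : PosRoot N} {z : slBorel N k} (hz : IsHomogeneous (some s) z)
    (hz0 : z ≠ 0) {α : slCartan N k →ₗ[k] k}
    (h : ∀ y : slCartan N k, ⁅(y : Matrix (Fin N) (Fin N) k), (z : Matrix (Fin N) (Fin N) k)⁆ =
      α y • (z : Matrix (Fin N) (Fin N) k)) :
    weight k (some s) = α :=
  LinearMap.ext fun y =>
    smul_left_injective k (by simpa using hz0) ((hz.lie_cartan y).symm.trans (h y))

theorem _root_.AlternatingMap.map_eq_zero_of_isHomogeneous_some {M ι : Type*} [AddCommGroup M]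
    [Module k M] (f : slBorel N k [⋀^ι]→ₗ[k] M) {b : ι → slBorel N k} {l l' : ι} (hll' : l ≠ l')
    {s : PosRoot N} (hl : IsHomogeneous (some s) (b l)) (hl' : IsHomogeneous (some s) (b l')) :
    f b = 0 := by
  obtain ⟨c, hc⟩ := hl
  obtain ⟨c', hc'⟩ := hl'
  by_cases h0 : c = 0
  · exact f.map_coord_zero l (Subtype.ext (by rw [hc, h0, Matrix.single_zero]; rfl))
  · refine f.map_eq_zero_of_eq_smul hll' (c := c' / c) (Subtype.ext ?_)
    rw [SetLike.val_smul, hc, hc', Matrix.smul_single, smul_eq_mul, div_mul_cancel₀ _ h0]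

variable (k) in
def rowTest (u : Fin N) : slCartan N k :=
  ⟨Matrix.diagonal (Pi.single u (N : k)) - 1, by
    refine ⟨?_, fun i j hij => ?_⟩
    · simp [Matrix.trace_sub, Matrix.trace_diagonal]
    · simp [Matrix.sub_apply, Matrix.diagonal_apply_ne _ hij, Matrix.one_apply_ne hij]⟩

theorem rootWeight_rowTest {u : Fin N} {s : PosRoot N} (hu : u ≤ s.1.1) :
    rootWeight k s (rowTest k u) = if s.1.1 = u then (N : k) else 0 := by
  have hq : s.1.2 ≠ u := (hu.trans_lt s.2).ne'
  simp [rootWeight, rowTest, Matrix.sub_apply, Pi.single_apply, hq]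

open Finset in
theorem _root_.AlternatingMap.map_eq_zero_of_sum_weight_eq_zero
    (hchar : ringChar k = 0 ∨ N < ringChar k) {M ι : Type*} [AddCommGroup M] [Module k M]
    [Fintype ι] (f : slBorel N k [⋀^ι]→ₗ[k] M) {b : ι → slBorel N k}
    {g : ι → Option (PosRoot N)} (hb : ∀ l, IsHomogeneous (g l) (b l))
    (hsum : ∑ l, weight k (g l) = 0) {l₀ : ι} {s₀ : PosRoot N} (h₀ : g l₀ = some s₀) :
    f b = 0 := by
  classical
  obtain ⟨⟨l₁, s₁⟩, h₁, hmin⟩ :=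
    exists_min_image (univ.filter fun ls : ι × PosRoot N => g ls.1 = some ls.2)
      (fun ls => ls.2.1.1) ⟨(l₀, s₀), by simpa using h₀⟩
  set u := s₁.1.1
  set S := univ.filter fun l => ∃ s, g l = some s ∧ s.1.1 = u
  have hweight : ∀ l, weight k (g l) (rowTest k u) = if l ∈ S then (N : k) else 0 := by
    intro l
    match hgl : g l with
    | none => simp [S, hgl, weight]
    | some s =>
      rw [weight, rootWeight_rowTest (hmin (l, s) (by simpa using hgl))]
      simp only [S, mem_filter, mem_univ, true_and, hgl, Option.some.injEq, exists_eq_left']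
  have hcard : (N : k) * #S = 0 := by
    have := LinearMap.congr_fun hsum (rowTest k u)
    simpa [hweight, sum_ite_mem, mul_comm] using this
  have hS : N < #S := by
    by_contra! hle
    refine mul_ne_zero (natCast_ne_zero_of_le hchar u.pos.ne' le_rfl)
      (natCast_ne_zero_of_le hchar (card_ne_zero_of_mem (a := l₁) ?_) hle) hcard
    exact mem_filter.mpr ⟨mem_univ _, s₁, (mem_filter.mp h₁).2, rfl⟩
  obtain ⟨l, hl, l', hl', hne, hcol⟩ := exists_ne_map_eq_of_card_lt_of_maps_to (t := univ)
    (by simpa using hS) (f := fun l => (g l).elim u fun s => s.1.2) (fun _ _ => mem_univ _)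
  obtain ⟨s, hs, hsu⟩ := (mem_filter.mp hl).2
  obtain ⟨s', hs', hsu'⟩ := (mem_filter.mp hl').2
  obtain rfl : s = s' :=
    Subtype.ext (Prod.ext (hsu.trans hsu'.symm) (by simpa [hs, hs'] using hcol))
  exact f.map_eq_zero_of_isHomogeneous_some hne (hs ▸ hb l) (hs' ▸ hb l')

variable {m : ℕ} {a : Fin (m + 2) → slBorel N k} {g : Fin (m + 2) → Option (PosRoot N)}

theorem bracketTerm_eq_zero_of_sum_weight_eq_zero (hchar : ringChar k = 0 ∨ N < ringChar k)
    {M : Type*} [AddCommGroup M] [Module k M] (F : slBorel N k [⋀^Fin (m + 1)]→ₗ[k] M)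
    (ha : ∀ l, IsHomogeneous (g l) (a l)) (hsum : ∑ l, weight k (g l) = 0)
    (i : Fin (m + 2)) (j : Fin (m + 1)) :
    bracketTerm F.toMultilinearMap i j a = 0 := by
  rw [bracketTerm_apply]
  by_cases h0 : ⁅a i, a (i.succAbove j)⁆ = 0
  · exact F.map_coord_zero 0 h0
  obtain ⟨s, hs⟩ := ((ha i).lie (ha (i.succAbove j))).resolve_left h0
  have hw := hs.weight_eq h0 ((ha i).lie_cartan_lie (ha (i.succAbove j)))
  refine F.map_eq_zero_of_sum_weight_eq_zero hchar
    (g := Fin.cons (some s) (g ∘ i.succAbove ∘ j.succAbove)) (Fin.cases hs fun l => ha _) ?_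
    (l₀ := 0) rfl
  rw [Fin.sum_univ_succ, Fin.cons_zero, hw, ← hsum, Fin.sum_univ_succAbove_succAbove _ i j]
  simp only [Fin.cons_succ, Function.comp_apply]

theorem bracketTerm_eq_zero_of_multidegZero (F : slBorel N k [⋀^Fin (m + 1)]→ₗ[k] k)
    (hF : MultidegZero N k F) (ha : ∀ l, IsHomogeneous (g l) (a l))
    (hsum : ∑ l, weight k (g l) ≠ 0) (i : Fin (m + 2)) (j : Fin (m + 1)) :
    bracketTerm F.toMultilinearMap i j a = 0 := by
  rw [bracketTerm_apply]
  refine hF _ (Fin.cons (weight k (g i) + weight k (g (i.succAbove j)))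
    fun l => weight k (g (i.succAbove (j.succAbove l))))
    (Fin.cases ((ha i).lie_cartan_lie (ha _)) fun l => (ha _).lie_cartan) ?_
  rwa [Fin.sum_cons, ← Fin.sum_univ_succAbove_succAbove (fun l => weight k (g l)) i j]

theorem coboundary_eq_zero_of_multidegZero (hchar : ringChar k = 0 ∨ N < ringChar k)
    (F : slBorel N k [⋀^Fin (m + 1)]→ₗ[k] k) (hF : MultidegZero N k F) :
    coboundary F.toMultilinearMap = 0 := by
  refine MultilinearMap.eq_zero_of_isHomogeneous _ fun g a ha =>
    coboundary_apply_eq_zero fun i j => ?_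
  by_cases hsum : ∑ l, weight k (g l) = 0
  · exact bracketTerm_eq_zero_of_sum_weight_eq_zero hchar F ha hsum i j
  · exact bracketTerm_eq_zero_of_multidegZero F hF ha hsum i j

theorem eq_zero_of_multidegZero_of_eq_coboundary (hchar : ringChar k = 0 ∨ N < ringChar k)
    (G : slBorel N k [⋀^Fin (m + 1)]→ₗ[k] k) (F : slBorel N k [⋀^Fin (m + 2)]→ₗ[k] k)
    (hFG : ⇑F = ⇑(coboundary G.toMultilinearMap)) (hF : MultidegZero N k F) : F = 0 := by
  refine AlternatingMap.coe_multilinearMap_injective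
    (MultilinearMap.eq_zero_of_isHomogeneous _ fun g a ha => ?_)
  by_cases hsum : ∑ l, weight k (g l) = 0
  · exact (congrFun hFG a).trans
      (coboundary_apply_eq_zero (bracketTerm_eq_zero_of_sum_weight_eq_zero hchar G ha hsum))
  · exact hF.apply_eq_zero ha hsum

end slBorel

theorem stmt11_general (N : ℕ) (k : Type*) [Field k]
    (hchar : ringChar k = 0 ∨ N < ringChar k) {n : ℕ} :
    (∀ F : AlternatingMap k (↥(slBorel N k)) k (Fin n),
      MultidegZero N k F → trivCoboundary ⇑F = 0) ∧
    (∀ (G : AlternatingMap k (↥(slBorel N k)) k (Fin n))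
        (F : AlternatingMap k (↥(slBorel N k)) k (Fin (n + 1))),
      ⇑F = trivCoboundary ⇑G → MultidegZero N k F → F = 0) := by
  cases n with
  | zero => exact ⟨fun _ _ => rfl, fun _ F hFG _ => DFunLike.coe_injective hFG⟩
  | succ m =>
    refine ⟨fun F hF => ?_, fun G F hFG hF => ?_⟩
    · rw [trivCoboundary_eq_coboundary, slBorel.coboundary_eq_zero_of_multidegZero hchar F hF]
      rfl
    · exact slBorel.eq_zero_of_multidegZero_of_eq_coboundary hchar G F
        (hFG.trans (trivCoboundary_eq_coboundary G)) hF

/-- If `char k = 0` or `char k > N`, every multidegree-zero `n`-cochain of the Borel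
subalgebra (trivial coefficients) is a cocycle; in particular every multidegree-zero
coboundary is zero. -/
theorem stmt11 (N : ℕ) (k : Type*) [Field k] (hN : 2 ≤ N)
    (hchar : ringChar k = 0 ∨ N < ringChar k) {n : ℕ} :
    (∀ F : AlternatingMap k (↥(slBorel N k)) k (Fin n),
      MultidegZero N k F → trivCoboundary ⇑F = 0) ∧
    (∀ (G : AlternatingMap k (↥(slBorel N k)) k (Fin n))
        (F : AlternatingMap k (↥(slBorel N k)) k (Fin (n + 1))),
      ⇑F = trivCoboundary ⇑G → MultidegZero N k F → F = 0) :=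
  stmt11_general N k hchar
end
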